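/- Let F be a field, A = F[λ₁, λ₂, …] the polynomial ring over F in countably many variables, M = ⟨λ₁, λ₂, …⟩ the ideal generated by all variables, and Â = [[A, M],[M, A]] the subring of M₂(A) of matrices with off-diagonal entries in M. For n ≥ 1 let Iₙ = ⟨λ₁, …, λₙ⟩ and Tₙ = [[Iₙ, Iₙ],[Iₙ, Iₙ]] (matrices with all entries in Iₙ). Then each Tₙ is a prime two-sided ideal of Â, T₁ ⊆ T₂ ⊆ ⋯ is an ascending chain, the union ⋃ₙ Tₙ = [[M,M],[M,M]] is not a prime two-sided ideal, and Â/⋃ₙ Tₙ is isomorphic to (A/M) × (A/M) ≅ F × F, which has two distinct minimal prime ideals. -/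
import Mathlib


/-- A two-sided ideal `P` of a ring `R` is prime if `P ≠ R` and
`aRb ⊆ P` implies `a ∈ P` or `b ∈ P`. -/
def IsPrimeTSI {R : Type*} [Ring R] (P : TwoSidedIdeal R) : Prop :=
  P ≠ ⊤ ∧ ∀ a b : R, (∀ r : R, a * r * b ∈ P) → a ∈ P ∨ b ∈ P

/-- The ring `Â = [[A, M],[M, A]]` of matrices over `A` with off-diagonal entries in `M`. -/
def hatA (A : Type*) [CommRing A] (M : Ideal A) : Subring (Matrix (Fin 2) (Fin 2) A) where
  carrier := {X | X 0 1 ∈ M ∧ X 1 0 ∈ M}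
  zero_mem' := by simp
  one_mem' := by simp [Matrix.one_apply]
  add_mem' := fun hX hY => ⟨M.add_mem hX.1 hY.1, M.add_mem hX.2 hY.2⟩
  neg_mem' := fun hX => ⟨M.neg_mem hX.1, M.neg_mem hX.2⟩
  mul_mem' := by
    rintro X Y ⟨hX1, hX2⟩ ⟨hY1, hY2⟩
    constructor
    · show (X * Y) 0 1 ∈ M
      rw [Matrix.mul_apply, Fin.sum_univ_two]
      exact M.add_mem (M.mul_mem_left _ hY1) (M.mul_mem_right _ hX1)
    · show (X * Y) 1 0 ∈ M
      rw [Matrix.mul_apply, Fin.sum_univ_two]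
      exact M.add_mem (M.mul_mem_right _ hX2) (M.mul_mem_left _ hY2)

/-- The two-sided ideal of `Â` consisting of matrices all of whose entries lie in an
ideal `I ⊆ M` of `A` (here stated for any ideal `I` of `A`). -/
def entIdeal {A : Type*} [CommRing A] (M : Ideal A) (I : Ideal A) :
    TwoSidedIdeal ↥(hatA A M) :=
  TwoSidedIdeal.mk'
    {X | ∀ i j : Fin 2, (X : Matrix (Fin 2) (Fin 2) A) i j ∈ I}
    (fun i j => by simp)
    (fun {x y} hx hy i j => by
      show (x : Matrix (Fin 2) (Fin 2) A) i j + (y : Matrix (Fin 2) (Fin 2) A) i j ∈ I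
      exact I.add_mem (hx i j) (hy i j))
    (fun {x} hx i j => by
      show -(x : Matrix (Fin 2) (Fin 2) A) i j ∈ I
      exact I.neg_mem (hx i j))
    (fun {x y} hy i j => by
      show ((x : Matrix (Fin 2) (Fin 2) A) * (y : Matrix (Fin 2) (Fin 2) A)) i j ∈ I
      rw [Matrix.mul_apply, Fin.sum_univ_two]
      exact I.add_mem (I.mul_mem_left _ (hy 0 j)) (I.mul_mem_left _ (hy 1 j)))
    (fun {x y} hx i j => by
      show ((x : Matrix (Fin 2) (Fin 2) A) * (y : Matrix (Fin 2) (Fin 2) A)) i j ∈ I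
      rw [Matrix.mul_apply, Fin.sum_univ_two]
      exact I.add_mem (I.mul_mem_right _ (hx i 0)) (I.mul_mem_right _ (hx i 1)))


section Aux

variable (F : Type*) [Field F]

local notation "A" => MvPolynomial ℕ F

open MvPolynomial

/-- the killing map for variables in `s` -/
noncomputable def killMap (s : Set ℕ) [DecidablePred (· ∈ s)] : A →+* A :=
  (aeval (fun i => if i ∈ s then (0 : A) else X i)).toRingHom

lemma sub_killMap_mem (s : Set ℕ) [DecidablePred (· ∈ s)] (p : A) :
    p - killMap F s p ∈ Ideal.span {q : A | ∃ i ∈ s, q = X i} := by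
  induction p using MvPolynomial.induction_on with
  | C a => simp [killMap]
  | add p q hp hq =>
      have := Ideal.add_mem _ hp hq
      simpa [killMap, sub_add_sub_comm] using this
  | mul_X p i hp =>
      by_cases hi : i ∈ s
      · have hXi : (X i : A) ∈ Ideal.span {q : A | ∃ i ∈ s, q = X i} :=
          Ideal.subset_span ⟨i, hi, rfl⟩
        have : p * X i - killMap F s (p * X i) = p * X i := by
          simp [killMap, hi]
        rw [this]
        exact Ideal.mul_mem_left _ _ hXi
      · have : p * X i - killMap F s (p * X i) = (p - killMap F s p) * X i := by
          simp [killMap, hi]; ring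
        rw [this]
        exact Ideal.mul_mem_right _ _ hp

lemma span_eq_ker (s : Set ℕ) [DecidablePred (· ∈ s)] :
    Ideal.span {q : A | ∃ i ∈ s, q = X i} = RingHom.ker (killMap F s) := by
  apply le_antisymm
  · rw [Ideal.span_le]
    rintro q ⟨i, hi, rfl⟩
    simp [RingHom.mem_ker, killMap, hi]
  · intro p hp
    rw [RingHom.mem_ker] at hp
    have := sub_killMap_mem F s p
    rwa [hp, sub_zero] at this

lemma mem_span_iff (s : Set ℕ) [DecidablePred (· ∈ s)] (p : A) :
    p ∈ Ideal.span {q : A | ∃ i ∈ s, q = X i} ↔ killMap F s p = 0 := by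
  rw [span_eq_ker]; rfl

lemma span_isPrime (s : Set ℕ) [DecidablePred (· ∈ s)] :
    (Ideal.span {q : A | ∃ i ∈ s, q = X i}).IsPrime := by
  rw [span_eq_ker]
  exact RingHom.ker_isPrime _

lemma X_notMem_span (s : Set ℕ) [DecidablePred (· ∈ s)] (n : ℕ) (hn : n ∉ s) :
    (X n : A) ∉ Ideal.span {q : A | ∃ i ∈ s, q = X i} := by
  rw [mem_span_iff]
  simp [killMap, hn, X_ne_zero]

lemma mem_M_iff (p : A) :
    p ∈ Ideal.span (Set.range (X : ℕ → A)) ↔ constantCoeff p = 0 := by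
  have hset : (Set.range (X : ℕ → A)) = {q : A | ∃ i ∈ (Set.univ : Set ℕ), q = X i} := by
    ext q; simp [eq_comm]
  rw [hset, mem_span_iff]
  have : killMap F Set.univ p = C (constantCoeff p) := by
    show aeval (fun i => if i ∈ Set.univ then (0:A) else X i) p = _
    rw [show (fun i => if i ∈ Set.univ then (0:A) else X i) = (fun _ => (0:A)) by
      funext i; simp, aeval_zero']
    rfl
  rw [this]
  constructor
  · intro h
    exact (MvPolynomial.C_eq_zero).mp h
  · intro h; rw [h, map_zero]

lemma In_eq (n : ℕ) :
    (Ideal.span {p : A | ∃ i < n, p = X i}) =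
      Ideal.span {q : A | ∃ i ∈ {i : ℕ | i < n}, q = X i} := rfl

lemma In_isPrime (n : ℕ) : (Ideal.span {p : A | ∃ i < n, p = X i}).IsPrime :=
  span_isPrime F {i : ℕ | i < n}

lemma Xn_notMem_In (n : ℕ) : (X n : A) ∉ Ideal.span {p : A | ∃ i < n, p = X i} :=
  X_notMem_span F {i : ℕ | i < n} n (by simp)

lemma In_le_M (n : ℕ) :
    Ideal.span {p : A | ∃ i < n, p = X i} ≤ Ideal.span (Set.range (X : ℕ → A)) := by
  apply Ideal.span_mono
  rintro q ⟨i, _, rfl⟩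
  exact ⟨i, rfl⟩

lemma In_mono : Monotone (fun n => (Ideal.span {p : A | ∃ i < n, p = X i} : Ideal A)) := by
  intro n m hnm
  apply Ideal.span_mono
  rintro q ⟨i, hi, rfl⟩
  exact ⟨i, lt_of_lt_of_le hi hnm, rfl⟩

lemma mem_M_exists_In (p : A) (hp : p ∈ Ideal.span (Set.range (X : ℕ → A))) :
    ∃ n, p ∈ Ideal.span {q : A | ∃ i < n, q = X i} := by
  refine Submodule.span_induction ?_ ?_ ?_ ?_ hp
  · rintro x ⟨i, rfl⟩
    exact ⟨i + 1, Ideal.subset_span ⟨i, Nat.lt_succ_self i, rfl⟩⟩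
  · exact ⟨0, Submodule.zero_mem _⟩
  · rintro x y _ _ ⟨n, hn⟩ ⟨m, hm⟩
    exact ⟨max n m, Ideal.add_mem _ (In_mono F (le_max_left n m) hn)
      (In_mono F (le_max_right n m) hm)⟩
  · rintro a x _ ⟨n, hn⟩
    exact ⟨n, Submodule.smul_mem _ a hn⟩

lemma one_not_mem_M : (1 : A) ∉ Ideal.span (Set.range (X : ℕ → A)) := by
  rw [mem_M_iff]; simp

end Aux

section Aux2

lemma mem_entIdeal {A : Type*} [CommRing A] {M I : Ideal A} (x : ↥(hatA A M)) :
    x ∈ entIdeal M I ↔ ∀ i j : Fin 2, (x : Matrix (Fin 2) (Fin 2) A) i j ∈ I :=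
  TwoSidedIdeal.mem_mk' _ _ _ _ _ _ x

lemma entry_mul {A : Type*} [CommRing A] (X Y : Matrix (Fin 2) (Fin 2) A) (c : A)
    (i j k l : Fin 2) :
    (X * (Matrix.of fun p q => if p = k ∧ q = l then c else 0) * Y) i j
      = X i k * c * Y l j := by
  fin_cases k <;> fin_cases l <;>
    simp [Matrix.mul_apply, Fin.sum_univ_two] <;> ring

lemma E_mul {A : Type*} [CommRing A] (r : Matrix (Fin 2) (Fin 2) A) (i j : Fin 2) :
    (((Matrix.of fun p q => if p = 0 ∧ q = 0 then (1:A) else 0) * r *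
      (Matrix.of fun p q => if p = 1 ∧ q = 1 then (1:A) else 0) :
        Matrix (Fin 2) (Fin 2) A)) i j
      = if i = 0 ∧ j = 1 then r 0 1 else 0 := by
  fin_cases i <;> fin_cases j <;>
    simp [Matrix.mul_apply, Fin.sum_univ_two]

open MvPolynomial in
/-- Primality of `Tₙ` for `n ≥ 1`. -/
lemma T_prime (F : Type*) [Field F] (n : ℕ) (hn : 1 ≤ n) :
    IsPrimeTSI (entIdeal (Ideal.span (Set.range (X : ℕ → MvPolynomial ℕ F)))
      (Ideal.span {p : MvPolynomial ℕ F | ∃ i < n, p = X i})) := by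
  set A := MvPolynomial ℕ F
  set M : Ideal A := Ideal.span (Set.range (X : ℕ → A)) with hM
  set In : Ideal A := Ideal.span {p : A | ∃ i < n, p = X i} with hIn
  have h1In : (1 : A) ∉ In := fun h => one_not_mem_M F (In_le_M F n h)
  constructor
  · intro htop
    have h1 : (1 : ↥(hatA A M)) ∈ entIdeal M In := htop ▸ TwoSidedIdeal.mem_top _
    have := (mem_entIdeal _).mp h1 0 0
    simp only [OneMemClass.coe_one, Matrix.one_apply_eq] at this
    exact h1In this
  · intro a b h
    by_contra hab
    push_neg at hab
    obtain ⟨ha, hb⟩ := hab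
    rw [mem_entIdeal] at ha hb
    push_neg at ha hb
    obtain ⟨i, k, hik⟩ := ha
    obtain ⟨l, j, hlj⟩ := hb
    set c : A := if k = l then 1 else X n with hc
    have hcIn : c ∉ In := by
      by_cases hkl : k = l
      · simpa [hc, hkl] using h1In
      · simpa [hc, hkl] using Xn_notMem_In F n
    have hcM : k ≠ l → c ∈ M := by
      intro hkl
      rw [hc, if_neg hkl]
      exact Ideal.subset_span ⟨n, rfl⟩
    set r : Matrix (Fin 2) (Fin 2) A :=
      Matrix.of fun p q => if p = k ∧ q = l then c else 0 with hr
    have hrmem : ∀ p q : Fin 2, p ≠ q → r p q ∈ M := by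
      intro p q hpq
      rw [hr]
      simp only [Matrix.of_apply]
      split_ifs with hcond
      · exact hcM (hcond.1 ▸ hcond.2 ▸ hpq)
      · exact M.zero_mem
    set R : ↥(hatA A M) := ⟨r, hrmem 0 1 (by decide), hrmem 1 0 (by decide)⟩ with hR
    have hprod := (mem_entIdeal _).mp (h R) i j
    have hcoe : ((a * R * b : ↥(hatA A M)) : Matrix (Fin 2) (Fin 2) A)
        = (a : Matrix (Fin 2) (Fin 2) A) * r * (b : Matrix (Fin 2) (Fin 2) A) := rfl
    rw [hcoe, entry_mul] at hprod
    rcases (In_isPrime F n).mem_or_mem hprod with h' | h'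
    · rcases (In_isPrime F n).mem_or_mem h' with h'' | h''
      · exact hik h''
      · exact hcIn h''
    · exact hlj h'

open MvPolynomial in
lemma minimal_fst (F : Type*) [Field F] :
    RingHom.ker (RingHom.fst F F) ∈ minimalPrimes (F × F) := by
  constructor
  · exact ⟨RingHom.ker_isPrime _, bot_le⟩
  · rintro Q ⟨hQp, -⟩ hQle
    have h01 : ((0 : F), (1 : F)) ∈ Q := by
      have hz : ((1 : F), (0 : F)) * ((0 : F), (1 : F)) ∈ Q := by
        have : ((1 : F), (0 : F)) * ((0 : F), (1 : F)) = 0 := by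
          simp [Prod.ext_iff]
        rw [this]; exact Q.zero_mem
      rcases hQp.mem_or_mem hz with h' | h'
      · exact absurd (hQle h') (by simp [RingHom.mem_ker])
      · exact h'
    rintro ⟨u, v⟩ huv
    have hu : u = 0 := by simpa [RingHom.mem_ker] using huv
    have : ((v : F), (v : F)) * ((0 : F), (1 : F)) ∈ Q := Q.mul_mem_left _ h01
    simpa [hu, Prod.ext_iff] using this

lemma minimal_snd (F : Type*) [Field F] :
    RingHom.ker (RingHom.snd F F) ∈ minimalPrimes (F × F) := by
  constructor
  · exact ⟨RingHom.ker_isPrime _, bot_le⟩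
  · rintro Q ⟨hQp, -⟩ hQle
    have h10 : ((1 : F), (0 : F)) ∈ Q := by
      have hz : ((0 : F), (1 : F)) * ((1 : F), (0 : F)) ∈ Q := by
        have : ((0 : F), (1 : F)) * ((1 : F), (0 : F)) = 0 := by
          simp [Prod.ext_iff]
        rw [this]; exact Q.zero_mem
      rcases hQp.mem_or_mem hz with h' | h'
      · exact absurd (hQle h') (by simp [RingHom.mem_ker])
      · exact h'
    rintro ⟨u, v⟩ huv
    have hv : v = 0 := by simpa [RingHom.mem_ker] using huv
    have : ((u : F), (u : F)) * ((1 : F), (0 : F)) ∈ Q := Q.mul_mem_left _ h10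
    simpa [hv, Prod.ext_iff] using this

end Aux2


open MvPolynomial in
/-- The homomorphism `Â → F × F` taking constant terms of the diagonal. -/
noncomputable def phiHat (F : Type*) [Field F] :
    ↥(hatA (MvPolynomial ℕ F) (Ideal.span (Set.range (X : ℕ → MvPolynomial ℕ F)))) →+* F × F where
  toFun x := (constantCoeff ((x : Matrix (Fin 2) (Fin 2) (MvPolynomial ℕ F)) 0 0),
    constantCoeff ((x : Matrix (Fin 2) (Fin 2) (MvPolynomial ℕ F)) 1 1))
  map_one' := by
    simp [Matrix.one_apply, Prod.ext_iff]
  map_mul' x y := by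
    have hx01 := (mem_M_iff F _).mp x.2.1
    have hy10 := (mem_M_iff F _).mp y.2.1
    have hx10 := (mem_M_iff F _).mp x.2.2
    have hy01 := (mem_M_iff F _).mp y.2.2
    have hcoe : ((x * y : ↥(hatA _ _)) : Matrix (Fin 2) (Fin 2) (MvPolynomial ℕ F))
        = (x : Matrix (Fin 2) (Fin 2) (MvPolynomial ℕ F)) * y := rfl
    simp only [hcoe, Matrix.mul_apply, Fin.sum_univ_two, map_add, map_mul, hx01, hy10,
      hx10, hy01, Prod.mk_mul_mk, mul_zero, zero_mul, add_zero, zero_add]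
  map_zero' := by simp
  map_add' x y := by
    have hcoe : ((x + y : ↥(hatA _ _)) : Matrix (Fin 2) (Fin 2) (MvPolynomial ℕ F))
        = (x : Matrix (Fin 2) (Fin 2) (MvPolynomial ℕ F)) + y := rfl
    simp only [hcoe, Matrix.add_apply, map_add, Prod.mk_add_mk]

open MvPolynomial in
lemma phiHat_apply (F : Type*) [Field F]
    (x : ↥(hatA (MvPolynomial ℕ F) (Ideal.span (Set.range (X : ℕ → MvPolynomial ℕ F))))) :
    phiHat F x = (constantCoeff ((x : Matrix (Fin 2) (Fin 2) (MvPolynomial ℕ F)) 0 0),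
      constantCoeff ((x : Matrix (Fin 2) (Fin 2) (MvPolynomial ℕ F)) 1 1)) := rfl


theorem main_stmt (F : Type*) [Field F] :
    (∀ n, 1 ≤ n → IsPrimeTSI (entIdeal (Ideal.span (Set.range (MvPolynomial.X : ℕ → MvPolynomial ℕ F))) (Ideal.span {p : MvPolynomial ℕ F | ∃ i < n, p = MvPolynomial.X i}))) ∧
    Monotone (fun n => entIdeal (Ideal.span (Set.range (MvPolynomial.X : ℕ → MvPolynomial ℕ F))) (Ideal.span {p : MvPolynomial ℕ F | ∃ i < n, p = MvPolynomial.X i})) ∧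
    (⋃ n, ⋃ (_ : 1 ≤ n), ((entIdeal (Ideal.span (Set.range (MvPolynomial.X : ℕ → MvPolynomial ℕ F))) (Ideal.span {p : MvPolynomial ℕ F | ∃ i < n, p = MvPolynomial.X i}) : TwoSidedIdeal ↥(hatA (MvPolynomial ℕ F) (Ideal.span (Set.range (MvPolynomial.X : ℕ → MvPolynomial ℕ F))))) : Set ↥(hatA (MvPolynomial ℕ F) (Ideal.span (Set.range (MvPolynomial.X : ℕ → MvPolynomial ℕ F)))))) = {Y : ↥(hatA (MvPolynomial ℕ F) (Ideal.span (Set.range (MvPolynomial.X : ℕ → MvPolynomial ℕ F)))) | ∀ i j : Fin 2, (Y : Matrix (Fin 2) (Fin 2) (MvPolynomial ℕ F)) i j ∈ (Ideal.span (Set.range (MvPolynomial.X : ℕ → MvPolynomial ℕ F)))} ∧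
    (∀ Q : TwoSidedIdeal ↥(hatA (MvPolynomial ℕ F) (Ideal.span (Set.range (MvPolynomial.X : ℕ → MvPolynomial ℕ F)))), (Q : Set ↥(hatA (MvPolynomial ℕ F) (Ideal.span (Set.range (MvPolynomial.X : ℕ → MvPolynomial ℕ F))))) = (⋃ n, ⋃ (_ : 1 ≤ n), ((entIdeal (Ideal.span (Set.range (MvPolynomial.X : ℕ → MvPolynomial ℕ F))) (Ideal.span {p : MvPolynomial ℕ F | ∃ i < n, p = MvPolynomial.X i}) : TwoSidedIdeal ↥(hatA (MvPolynomial ℕ F) (Ideal.span (Set.range (MvPolynomial.X : ℕ → MvPolynomial ℕ F))))) : Set ↥(hatA (MvPolynomial ℕ F) (Ideal.span (Set.range (MvPolynomial.X : ℕ → MvPolynomial ℕ F)))))) → ¬ IsPrimeTSI Q) ∧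
    (∃ φ : ↥(hatA (MvPolynomial ℕ F) (Ideal.span (Set.range (MvPolynomial.X : ℕ → MvPolynomial ℕ F)))) →+* F × F, Function.Surjective φ ∧
      ∀ a : ↥(hatA (MvPolynomial ℕ F) (Ideal.span (Set.range (MvPolynomial.X : ℕ → MvPolynomial ℕ F)))), φ a = 0 ↔ a ∈ (⋃ n, ⋃ (_ : 1 ≤ n), ((entIdeal (Ideal.span (Set.range (MvPolynomial.X : ℕ → MvPolynomial ℕ F))) (Ideal.span {p : MvPolynomial ℕ F | ∃ i < n, p = MvPolynomial.X i}) : TwoSidedIdeal ↥(hatA (MvPolynomial ℕ F) (Ideal.span (Set.range (MvPolynomial.X : ℕ → MvPolynomial ℕ F))))) : Set ↥(hatA (MvPolynomial ℕ F) (Ideal.span (Set.range (MvPolynomial.X : ℕ → MvPolynomial ℕ F))))))) ∧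
    (∃ p q : Ideal (F × F), p ≠ q ∧
      p ∈ minimalPrimes (F × F) ∧ q ∈ minimalPrimes (F × F)) := by
  have hU : (⋃ n, ⋃ (_ : 1 ≤ n), ((entIdeal (Ideal.span (Set.range (MvPolynomial.X : ℕ → MvPolynomial ℕ F))) (Ideal.span {p : MvPolynomial ℕ F | ∃ i < n, p = MvPolynomial.X i}) : TwoSidedIdeal ↥(hatA (MvPolynomial ℕ F) (Ideal.span (Set.range (MvPolynomial.X : ℕ → MvPolynomial ℕ F))))) : Set ↥(hatA (MvPolynomial ℕ F) (Ideal.span (Set.range (MvPolynomial.X : ℕ → MvPolynomial ℕ F)))))) = {Y : ↥(hatA (MvPolynomial ℕ F) (Ideal.span (Set.range (MvPolynomial.X : ℕ → MvPolynomial ℕ F)))) | ∀ i j : Fin 2, (Y : Matrix (Fin 2) (Fin 2) (MvPolynomial ℕ F)) i j ∈ (Ideal.span (Set.range (MvPolynomial.X : ℕ → MvPolynomial ℕ F)))} := by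
    ext x
    simp only [Set.mem_iUnion, SetLike.mem_coe, Set.mem_setOf_eq]
    constructor
    · rintro ⟨n, hn, hx⟩ i j
      exact In_le_M F n ((mem_entIdeal x).mp hx i j)
    · intro hx
      choose f hf using fun (i j : Fin 2) => mem_M_exists_In F _ (hx i j)
      refine ⟨f 0 0 + f 0 1 + f 1 0 + f 1 1 + 1, by omega, (mem_entIdeal x).mpr ?_⟩
      intro i j
      refine In_mono F ?_ (hf i j)
      fin_cases i <;> fin_cases j <;> simp only [Fin.zero_eta, Fin.mk_one] <;> omega
  refine ⟨fun n hn => T_prime F n hn, ?_, hU, ?_, ?_, ?_⟩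
  · -- Monotone
    intro n m hnm x hx
    exact (mem_entIdeal x).mpr fun i j => In_mono F hnm ((mem_entIdeal x).mp hx i j)
  · -- not prime
    intro Q hQ hP
    obtain ⟨-, hpr⟩ := hP
    have he00 : (Matrix.of fun p q => if p = 0 ∧ q = 0 then (1 : MvPolynomial ℕ F) else 0)
        ∈ (hatA (MvPolynomial ℕ F) (Ideal.span (Set.range (MvPolynomial.X : ℕ → MvPolynomial ℕ F)))) := by
      refine ⟨?_, ?_⟩ <;>
      · simp only [Matrix.of_apply]
        rw [if_neg (by decide)]
        exact Submodule.zero_mem _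
    have he11 : (Matrix.of fun p q => if p = 1 ∧ q = 1 then (1 : MvPolynomial ℕ F) else 0)
        ∈ (hatA (MvPolynomial ℕ F) (Ideal.span (Set.range (MvPolynomial.X : ℕ → MvPolynomial ℕ F)))) := by
      refine ⟨?_, ?_⟩ <;>
      · simp only [Matrix.of_apply]
        rw [if_neg (by decide)]
        exact Submodule.zero_mem _
    set e00 : ↥(hatA (MvPolynomial ℕ F) (Ideal.span (Set.range (MvPolynomial.X : ℕ → MvPolynomial ℕ F)))) := ⟨_, he00⟩ with he00'
    set e11 : ↥(hatA (MvPolynomial ℕ F) (Ideal.span (Set.range (MvPolynomial.X : ℕ → MvPolynomial ℕ F)))) := ⟨_, he11⟩ with he11'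
    have hmem : ∀ r : ↥(hatA (MvPolynomial ℕ F) (Ideal.span (Set.range (MvPolynomial.X : ℕ → MvPolynomial ℕ F)))), e00 * r * e11 ∈ Q := by
      intro r
      rw [← SetLike.mem_coe, hQ, hU]
      intro i j
      have hcoe : ((e00 * r * e11 : ↥(hatA (MvPolynomial ℕ F) (Ideal.span (Set.range (MvPolynomial.X : ℕ → MvPolynomial ℕ F))))) : Matrix (Fin 2) (Fin 2) (MvPolynomial ℕ F)) i j
          = if i = 0 ∧ j = 1 then (r : Matrix (Fin 2) (Fin 2) (MvPolynomial ℕ F)) 0 1 else 0 :=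
        E_mul _ i j
      rw [hcoe]
      split_ifs
      · exact r.2.1
      · exact Submodule.zero_mem _
    rcases hpr e00 e11 hmem with h' | h'
    · rw [← SetLike.mem_coe, hQ, hU] at h'
      have := h' 0 0
      simp only [he00', Matrix.of_apply, if_pos (⟨rfl, rfl⟩ : (0:Fin 2) = 0 ∧ (0:Fin 2) = 0)]
        at this
      exact one_not_mem_M F this
    · rw [← SetLike.mem_coe, hQ, hU] at h'
      have := h' 1 1
      simp only [he11', Matrix.of_apply, if_pos (⟨rfl, rfl⟩ : (1:Fin 2) = 1 ∧ (1:Fin 2) = 1)]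
        at this
      exact one_not_mem_M F this
  · -- phi
    refine ⟨phiHat F, ?_, ?_⟩
    · rintro ⟨u, v⟩
      have hd : (Matrix.of fun p q : Fin 2 =>
          if p = q then (if p = 0 then MvPolynomial.C u else MvPolynomial.C v) else 0)
          ∈ (hatA (MvPolynomial ℕ F) (Ideal.span (Set.range (MvPolynomial.X : ℕ → MvPolynomial ℕ F)))) := by
        refine ⟨?_, ?_⟩ <;>
        · simp only [Matrix.of_apply]
          rw [if_neg (by decide)]
          exact Submodule.zero_mem _
      refine ⟨⟨_, hd⟩, ?_⟩
      rw [phiHat_apply]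
      simp
    · intro a
      rw [phiHat_apply, hU]
      constructor
      · intro h i j
        rw [Prod.ext_iff] at h
        obtain ⟨h1, h2⟩ := h
        fin_cases i <;> fin_cases j
        · exact (mem_M_iff F _).mpr h1
        · exact a.2.1
        · exact a.2.2
        · exact (mem_M_iff F _).mpr h2
      · intro h
        rw [Prod.ext_iff]
        exact ⟨(mem_M_iff F _).mp (h 0 0), (mem_M_iff F _).mp (h 1 1)⟩
  · -- minimal primes
    refine ⟨RingHom.ker (RingHom.fst F F), RingHom.ker (RingHom.snd F F), ?_,
      minimal_fst F, minimal_snd F⟩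
    intro h
    have h1 : ((0:F), (1:F)) ∈ RingHom.ker (RingHom.fst F F) := by simp [RingHom.mem_ker]
    rw [h] at h1
    simp [RingHom.mem_ker] at h1

/-- For `A = F[λ₁, λ₂, …]`, `M = ⟨λ₁, λ₂, …⟩`, `Iₙ = ⟨λ₁, …, λₙ⟩` and
`Tₙ = [[Iₙ, Iₙ],[Iₙ, Iₙ]]`: the `Tₙ` are prime two-sided ideals of `Â` forming an
ascending chain, their union `[[M,M],[M,M]]` is not prime, and `Â/⋃ₙ Tₙ ≅ F × F`,
which has two distinct minimal primes. -/
theorem stmt_17 (F : Type*) [Field F] :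
    letI A := MvPolynomial ℕ F
    letI M : Ideal A := Ideal.span (Set.range MvPolynomial.X)
    letI I : ℕ → Ideal A := fun n => Ideal.span {p | ∃ i < n, p = MvPolynomial.X i}
    letI T : ℕ → TwoSidedIdeal ↥(hatA A M) := fun n => entIdeal M (I n)
    letI U : Set ↥(hatA A M) := ⋃ n, ⋃ (_ : 1 ≤ n), (T n : Set ↥(hatA A M))
    (∀ n, 1 ≤ n → IsPrimeTSI (T n)) ∧
    Monotone T ∧
    U = {X : ↥(hatA A M) | ∀ i j : Fin 2, (X : Matrix (Fin 2) (Fin 2) A) i j ∈ M} ∧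
    (∀ Q : TwoSidedIdeal ↥(hatA A M), (Q : Set ↥(hatA A M)) = U → ¬ IsPrimeTSI Q) ∧
    (∃ φ : ↥(hatA A M) →+* F × F, Function.Surjective φ ∧
      ∀ a : ↥(hatA A M), φ a = 0 ↔ a ∈ U) ∧
    (∃ p q : Ideal (F × F), p ≠ q ∧
      p ∈ minimalPrimes (F × F) ∧ q ∈ minimalPrimes (F × F)) := by
  exact main_stmt F
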